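/- Let I ⊆ S be a monomial ideal with linear quotients, with r(I) = max_{2≤i≤m} |G(I_i)| where I_i = (u_1,…,u_{i−1}) : u_i. Then sdepth(I) ≥ n − r(I) = depth(I); in particular Stanley's conjecture sdepth(I) ≥ depth(I) holds for monomial ideals with linear quotients. -/

import Mathlib

/-!
Every monomial `x^w` of `I` is divisible by some generator; let `u i` be the first one and write
`x^w = x^{u i} x^b`. Minimality of `i` says exactly that `x^b` is not in the colon ideal
`(x^{u j} : j < i) : x^{u i}`, i.e. that `b` involves only variables outside `G i`; conversely no
such product is divisible by an earlier generator. Hence `I = ⊕ᵢ x^{u i} K[x_k : k ∉ G i]`, a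
Stanley decomposition whose spaces have dimension `n - |G i| ≥ n - r(I)`.
-/

open MvPolynomial

namespace MvPolynomial

variable {σ R : Type*} [CommSemiring R]

theorem restrictScalars_ideal_span_monomial_image (s : Set (σ →₀ ℕ)) :
    (Ideal.span ((monomial · (1 : R)) '' s)).restrictScalars R =
      restrictSupport R (upperClosure s) := by
  ext f
  rw [Submodule.restrictScalars_mem, mem_ideal_span_monomial_image, mem_restrictSupport_iff]
  simp only [Set.subset_def, SetLike.mem_coe, mem_upperClosure]

variable [Nontrivial R]

theorem monomial_mem_ideal_span_monomial_image {c : σ →₀ ℕ} {s : Set (σ →₀ ℕ)} :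
    monomial c (1 : R) ∈ Ideal.span ((monomial · (1 : R)) '' s) ↔ ∃ a ∈ s, a ≤ c := by
  classical
  simp [mem_ideal_span_monomial_image, support_monomial]

theorem monomial_mem_ideal_span_X_image {c : σ →₀ ℕ} {s : Set σ} :
    monomial c (1 : R) ∈ Ideal.span (X '' s : Set (MvPolynomial σ R)) ↔ ∃ k ∈ s, c k ≠ 0 := by
  classical
  simp [mem_ideal_span_X_image, support_monomial]

end MvPolynomial

/-- `Z i` is the complement of a set of variables generating the colon ideal
`(x^{u j} : j < i) : x^{u i}`; that colon ideal is monomial, so it is tested on monomials `x^c`. -/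
def HasLinearQuotients {σ ι : Type*} [LT ι] (u : ι → σ →₀ ℕ) (Z : ι → Set σ) : Prop :=
  ∀ i c, (∃ j < i, u j ≤ c + u i) ↔ ¬(↑c.support ⊆ Z i)

theorem hasLinearQuotients_of_colon_eq {σ ι R : Type*} [CommSemiring R] [Nontrivial R] [LT ι]
    (u : ι → σ →₀ ℕ) (G : ι → Set σ)
    (h : ∀ i, {f : MvPolynomial σ R |
        f * monomial (u i) 1 ∈ Ideal.span {g | ∃ j, j < i ∧ g = monomial (u j) 1}} =
      ((Ideal.span {g | ∃ j ∈ G i, g = X j} : Ideal (MvPolynomial σ R)) : Set _)) :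
    HasLinearQuotients u fun i => (G i)ᶜ := by
  intro i c
  have hc := Set.ext_iff.mp (h i) (monomial c 1)
  have hL : {g | ∃ j, j < i ∧ g = monomial (u j) (1 : R)} =
      (monomial · 1) '' (u '' {j | j < i}) := by
    ext; simp [eq_comm]
  have hR : {g | ∃ j ∈ G i, g = (X j : MvPolynomial σ R)} = X '' G i := by
    ext; simp [eq_comm]
  rw [Set.mem_ofPred_eq, SetLike.mem_coe, monomial_mul, mul_one, hL, hR,
    monomial_mem_ideal_span_monomial_image, monomial_mem_ideal_span_X_image,
    Set.exists_mem_image] at hc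
  simpa [Set.not_subset, and_comm] using hc

namespace HasLinearQuotients

variable {σ ι : Type*} [LinearOrder ι] {u : ι → σ →₀ ℕ} {Z : ι → Set σ}

theorem not_lt_of_add_eq (h : HasLinearQuotients u Z) {i k : ι} {b c : σ →₀ ℕ}
    (hb : ↑b.support ⊆ Z i) (heq : u i + b = u k + c) : ¬k < i := fun hki =>
  (h i b).mp ⟨k, hki, by rw [add_comm b, heq]; exact le_self_add⟩ hb

theorem injective_add (h : HasLinearQuotients u Z) :
    Function.Injective fun p : Σ i, {b : σ →₀ ℕ // ↑b.support ⊆ Z i} => u p.1 + p.2.1 := by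
  rintro ⟨i, b, hb⟩ ⟨k, c, hc⟩ (heq : u i + b = u k + c)
  obtain rfl : i = k := le_antisymm (not_lt.mp (h.not_lt_of_add_eq hb heq))
    (not_lt.mp (h.not_lt_of_add_eq hc heq.symm))
  obtain rfl : b = c := add_left_cancel heq
  rfl

theorem range_add [WellFoundedLT ι] (h : HasLinearQuotients u Z) :
    Set.range (fun p : Σ i, {b : σ →₀ ℕ // ↑b.support ⊆ Z i} => u p.1 + p.2.1) =
      upperClosure (Set.range u) := by
  ext w
  rw [SetLike.mem_coe, mem_upperClosure, Set.exists_range_iff, Set.mem_range]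
  constructor
  · rintro ⟨⟨i, b, -⟩, rfl⟩
    exact ⟨i, le_self_add⟩
  · rintro ⟨j, hj⟩
    -- `x^w` lies in the Stanley space of the first generator dividing it
    obtain ⟨i, hiw, hmin⟩ := wellFounded_lt.has_min {j | u j ≤ w} ⟨j, hj⟩
    refine ⟨⟨i, w - u i, by_contra fun hZ => ?_⟩, add_tsub_cancel_of_le hiw⟩
    obtain ⟨j, hji, hjw⟩ := (h i (w - u i)).mpr hZ
    exact hmin j (by rwa [tsub_add_cancel_of_le hiw] at hjw) hji

end HasLinearQuotients

/-- Let `I = (u_1,…,u_m) ⊆ S = K[x_1,…,x_n]` be a monomial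
ideal with linear quotients, and `r(I) = max_i |G(I_i)|`.  Then
`sdepth(I) ≥ n − r(I) (= depth I)`: there is a Stanley decomposition
`I = ⊕ v_i K[Z_i]` into Stanley spaces spanned by monomials in which every
Stanley space has dimension `|Z_i| ≥ n − r(I)`; thus Stanley's conjecture
holds for monomial ideals with linear quotients. -/
theorem stmt17 (K : Type) [Field K] (n m : ℕ)
    (u : Fin m → (Fin n →₀ ℕ)) (G : Fin m → Finset (Fin n))
    (hlq : ∀ i : Fin m,
      {f : MvPolynomial (Fin n) K |
          f * monomial (u i) (1 : K) ∈
            Ideal.span {g | ∃ j : Fin m, j < i ∧ g = monomial (u j) (1 : K)}} =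
        (Ideal.span {g | ∃ j ∈ G i, g = (X j : MvPolynomial (Fin n) K)} : Set _)) :
    ∃ (t : ℕ) (v : Fin t → (Fin n →₀ ℕ)) (Z : Fin t → Finset (Fin n)),
      LinearIndependent K
        (fun p : Σ i : Fin t, {b : Fin n →₀ ℕ // ↑b.support ⊆ (Z i : Set (Fin n))} =>
          (monomial (v p.1 + p.2.val) (1 : K) : MvPolynomial (Fin n) K)) ∧
      Submodule.span K
        {f : MvPolynomial (Fin n) K | ∃ (i : Fin t) (b : Fin n →₀ ℕ),
          ↑b.support ⊆ (Z i : Set (Fin n)) ∧ f = monomial (v i + b) (1 : K)} =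
        (Ideal.span {g | ∃ i : Fin m, g = monomial (u i) (1 : K)}).restrictScalars K ∧
      ∀ i : Fin t, n - Finset.univ.sup (fun j => (G j).card) ≤ (Z i).card := by
  have hG : HasLinearQuotients u fun i => ↑(G i)ᶜ := by
    simpa only [← Finset.coe_compl] using hasLinearQuotients_of_colon_eq u (fun i => ↑(G i)) hlq
  refine ⟨m, u, fun i => (G i)ᶜ, ?_, ?_, fun i => ?_⟩
  · exact (basisMonomials _ K).linearIndependent.comp _ hG.injective_add
  · have hStanley : {f : MvPolynomial (Fin n) K | ∃ (i : Fin m) (b : Fin n →₀ ℕ),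
          ↑b.support ⊆ (((G i)ᶜ : Finset (Fin n)) : Set (Fin n)) ∧
            f = monomial (u i + b) (1 : K)} =
        (monomial · 1) '' Set.range
          (fun p : Σ i, {b : Fin n →₀ ℕ // ↑b.support ⊆ ↑(G i)ᶜ} => u p.1 + p.2.1) := by
      ext f
      constructor
      · rintro ⟨i, b, hb, rfl⟩
        exact ⟨_, ⟨⟨i, b, hb⟩, rfl⟩, rfl⟩
      · rintro ⟨_, ⟨⟨i, b, hb⟩, rfl⟩, rfl⟩
        exact ⟨i, b, hb, rfl⟩
    have hGens : {g | ∃ i : Fin m, g = monomial (u i) (1 : K)} = (monomial · 1) '' Set.range u := by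
      ext; simp [eq_comm]
    rw [hStanley, hGens, restrictScalars_ideal_span_monomial_image, ← hG.range_add,
      restrictSupport_eq_span]
    rfl
  · rw [Finset.card_compl, Fintype.card_fin]
    exact Nat.sub_le_sub_left (Finset.le_sup (Finset.mem_univ i)) n
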